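/- Let X be a C-semiregular space and let X₀ = {x ∈ X : x is an u-point of X}. Then the pair (X, X₀) is a 2-contact space, and X₀ is a dense extremally disconnected compact Hausdorff subspace of X; moreover, X₀ is the unique dense extremally disconnected compact Hausdorff subspace of X. -/
import Mathlib


open TopologicalSpace

/-- A set is regular closed if it equals the closure of its interior. -/
def IsRC {X : Type*} [TopologicalSpace X] (F : Set X) : Prop :=
  F = closure (interior F)

/-- The relation `C#` associated to a precontact relation `C`. -/
def CSharp {B : Type*} [BooleanAlgebra B] (C : B → B → Prop) (a b : B) : Prop :=
  C a b ∨ C b a ∨ a ⊓ b ≠ ⊥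

/-- A clan of a precontact algebra `(B,C)`. -/
def IsClan {B : Type*} [BooleanAlgebra B] (C : B → B → Prop) (Γ : Set B) : Prop :=
  Γ.Nonempty ∧ ⊥ ∉ Γ ∧ (∀ a ∈ Γ, ∀ b : B, a ≤ b → b ∈ Γ) ∧
    (∀ a b : B, a ⊔ b ∈ Γ → a ∈ Γ ∨ b ∈ Γ) ∧
    (∀ a ∈ Γ, ∀ b ∈ Γ, CSharp C a b)

/-- For a clopen subset `A` of the subspace `X₀`, its closure `cl_X A` in the ambient space. -/
def embCl {X : Type*} [TopologicalSpace X] (X₀ : Set X) (A : Clopens ↥X₀) : Set X :=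
  closure (Subtype.val '' (A : Set ↥X₀))

/-- A 2-contact space `(X, X₀)`. -/
structure TwoContact (X : Type*) [TopologicalSpace X] (X₀ : Set X) : Prop where
  /-- `X₀` is dense in `X` -/
  dense : Dense X₀
  /-- (CS1): `X` is a `T₀`-space -/
  t0 : T0Space X
  /-- (CS2): `X₀` is compact -/
  compact₀ : CompactSpace ↥X₀
  /-- (CS2): `X₀` is Hausdorff -/
  t2₀ : T2Space ↥X₀
  /-- (CS2): `X₀` is zero-dimensional -/
  zdim₀ : IsTopologicalBasis {s : Set ↥X₀ | IsClopen s}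
  /-- (CS3): `RC(X,X₀)` is a closed base for `X` -/
  base : ∀ U : Set X, IsOpen U → ∀ x ∈ U,
    ∃ A : Clopens ↥X₀, x ∈ (embCl X₀ A)ᶜ ∧ (embCl X₀ A)ᶜ ⊆ U
  /-- (CS4): every clan of `(CO(X₀), δ_(X,X₀))` is of the form `Γ_{x,X₀}` -/
  cs4 : ∀ Γ : Set (Clopens ↥X₀),
    IsClan (fun A B : Clopens ↥X₀ => (embCl X₀ A ∩ embCl X₀ B).Nonempty) Γ →
    ∃ x : X, Γ = {A : Clopens ↥X₀ | x ∈ embCl X₀ A}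

/-- A clan of the standard contact algebra `(RC(X), C_X)`. -/
def IsClanRC {X : Type*} [TopologicalSpace X] (Γ : Set (Set X)) : Prop :=
  (∀ F ∈ Γ, IsRC F) ∧ Γ.Nonempty ∧ ∅ ∉ Γ ∧
    (∀ F ∈ Γ, ∀ G : Set X, IsRC G → F ⊆ G → G ∈ Γ) ∧
    (∀ F G : Set X, IsRC F → IsRC G → F ∪ G ∈ Γ → F ∈ Γ ∨ G ∈ Γ) ∧
    (∀ F ∈ Γ, ∀ G ∈ Γ, (F ∩ G).Nonempty)

/-- A space is semiregular if its regular closed sets form a closed base. -/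
def Semiregular (X : Type*) [TopologicalSpace X] : Prop :=
  ∀ U : Set X, IsOpen U → ∀ x ∈ U, ∃ F : Set X, IsRC F ∧ x ∉ F ∧ Fᶜ ⊆ U

/-- A C-semiregular space. -/
def CSemiregular (X : Type*) [TopologicalSpace X] : Prop :=
  Semiregular X ∧ T0Space X ∧
    ∀ Γ : Set (Set X), IsClanRC Γ → ∃ x : X, Γ = {F : Set X | IsRC F ∧ x ∈ F}

/-- An u-point of a topological space. -/
def IsUPoint {X : Type*} [TopologicalSpace X] (x : X) : Prop :=
  ∀ U V : Set X, IsOpen U → IsOpen V →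
    x ∈ closure U ∩ closure V → x ∈ closure (U ∩ V)

section Aux

open Set TopologicalSpace

variable {X : Type*} [TopologicalSpace X]

lemma IsRC.isClosed' {F : Set X} (h : IsRC F) : IsClosed F := by
  rw [h]; exact isClosed_closure

lemma isRC_closure {U : Set X} (hU : IsOpen U) : IsRC (closure U) :=
  le_antisymm (closure_mono (interior_maximal subset_closure hU))
    (closure_minimal interior_subset isClosed_closure)

lemma isRC_univ : IsRC (univ : Set X) := by simp [IsRC]

lemma mem_closure_inter_open {s o : Set X} {z : X} (ho : IsOpen o) (hzo : z ∈ o)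
    (hz : z ∈ closure s) : z ∈ closure (o ∩ s) := by
  rw [mem_closure_iff] at *
  intro o' ho' hzo'
  obtain ⟨w, ⟨hw1, hw2⟩, hws⟩ := hz (o' ∩ o) (ho'.inter ho) ⟨hzo', hzo⟩
  exact ⟨w, hw1, hw2, hws⟩

lemma interior_closure_inter_subset {U V : Set X} (hU : IsOpen U) (hV : IsOpen V) :
    interior (closure U ∩ closure V) ⊆ closure (U ∩ V) := by
  intro z hz
  rw [mem_closure_iff]
  intro o ho hzo
  have hzU : z ∈ closure U := (interior_subset hz).1
  rw [mem_closure_iff] at hzU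
  obtain ⟨w, ⟨hwo, hwi⟩, hwU⟩ := hzU (o ∩ interior (closure U ∩ closure V))
    (ho.inter isOpen_interior) ⟨hzo, hz⟩
  have hwV : w ∈ closure V := (interior_subset hwi).2
  rw [mem_closure_iff] at hwV
  obtain ⟨v, ⟨hvo, hvU⟩, hvV⟩ := hwV (o ∩ U) (ho.inter hU) ⟨hwo, hwU⟩
  exact ⟨v, hvo, hvU, hvV⟩

lemma upoint_inf {x : X} (hx : IsUPoint x) {F G : Set X} (hF : IsRC F) (hG : IsRC G)
    (hxF : x ∈ F) (hxG : x ∈ G) : x ∈ closure (interior (F ∩ G)) := by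
  have h := hx (interior F) (interior G) isOpen_interior isOpen_interior
    ⟨hF ▸ hxF, hG ▸ hxG⟩
  rwa [← interior_inter] at h

lemma upoint_of_forall_inf {x : X}
    (h : ∀ F G : Set X, IsRC F → IsRC G → x ∈ F → x ∈ G → x ∈ closure (interior (F ∩ G))) :
    IsUPoint x := by
  intro U V hU hV hx
  have h1 := h (closure U) (closure V) (isRC_closure hU) (isRC_closure hV) hx.1 hx.2
  exact closure_minimal (interior_closure_inter_subset hU hV) isClosed_closure h1

lemma upoint_mem_rc_iff {x : X} (hx : IsUPoint x) {F : Set X} (hF : IsRC F) :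
    x ∈ F ↔ x ∉ closure Fᶜ := by
  constructor
  · intro hxF hxc
    have h := hx (interior F) Fᶜ isOpen_interior hF.isClosed'.isOpen_compl ⟨hF ▸ hxF, hxc⟩
    have he : interior F ∩ Fᶜ = ∅ := by
      ext z
      simp only [Set.mem_inter_iff, Set.mem_empty_iff_false, iff_false, not_and]
      intro h1 h2
      exact h2 (interior_subset h1)
    rw [he, closure_empty] at h
    exact h
  · intro hc
    by_contra hxF
    exact hc (subset_closure hxF)

/-- Regular open subsets. -/
def IsRO (U : Set X) : Prop := U = interior (closure U)

lemma IsRO.isOpen' {U : Set X} (h : IsRO U) : IsOpen U := by rw [h]; exact isOpen_interior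

lemma isRO_univ : IsRO (univ : Set X) := by simp [IsRO]

lemma IsRO.inter {U V : Set X} (hU : IsRO U) (hV : IsRO V) : IsRO (U ∩ V) := by
  refine le_antisymm (interior_maximal subset_closure (hU.isOpen'.inter hV.isOpen')) ?_
  intro z hz
  constructor
  · rw [hU]; exact interior_mono (closure_mono inter_subset_left) hz
  · rw [hV]; exact interior_mono (closure_mono inter_subset_right) hz

lemma isRO_interior_closure {U : Set X} (hU : IsOpen U) : IsRO (interior (closure U)) := by
  have h : closure (interior (closure U)) = closure U :=
    le_antisymm (closure_minimal interior_subset isClosed_closure)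
      (closure_mono (interior_maximal subset_closure hU))
  unfold IsRO
  rw [h]

lemma isRO_interior_compl {U : Set X} (hU : IsOpen U) : IsRO (interior Uᶜ) := by
  refine le_antisymm (interior_maximal subset_closure isOpen_interior) ?_
  exact interior_mono (closure_minimal interior_subset hU.isClosed_compl)

lemma isRO_compl_rc {F : Set X} (hF : IsRC F) : IsRO Fᶜ := by
  unfold IsRO
  rw [closure_compl, interior_compl, ← hF]

lemma isRO_interior_rc {F : Set X} (hF : IsRC F) : IsRO (interior F) := by
  unfold IsRO
  rw [← hF]

lemma interior_compl_interior_rc {F : Set X} (hF : IsRC F) : interior (interior F)ᶜ = Fᶜ := by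
  rw [interior_compl, ← hF]

/-- A (proper) filter of regular open sets. -/
def ROFilter (M : Set (Set X)) : Prop :=
  (∀ U ∈ M, IsRO U) ∧ (∀ U ∈ M, U.Nonempty) ∧ Set.univ ∈ M ∧
    (∀ U ∈ M, ∀ V ∈ M, U ∩ V ∈ M) ∧ (∀ U ∈ M, ∀ V : Set X, IsRO V → U ⊆ V → V ∈ M)

lemma exists_maximal_rofilter {U₀ : Set X} (h0 : IsRO U₀) (hne : U₀.Nonempty) :
    ∃ M, ROFilter M ∧ U₀ ∈ M ∧ ∀ U : Set X, IsRO U → U ∉ M → interior Uᶜ ∈ M := by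
  set S : Set (Set (Set X)) := {M | ROFilter M ∧ U₀ ∈ M} with hS
  have hzorn := zorn_subset_nonempty S ?_ {V | IsRO V ∧ U₀ ⊆ V} ?_
  · obtain ⟨M, hMbase, hmax⟩ := hzorn
    obtain ⟨hMRO, hMU0⟩ := hmax.1
    refine ⟨M, hMRO, hMU0, ?_⟩
    intro U hU hUM
    by_cases hV : ∀ V ∈ M, (V ∩ U).Nonempty
    · exfalso
      set M' := {W : Set X | IsRO W ∧ ∃ V ∈ M, V ∩ U ⊆ W} with hM'
      have hMM' : M ⊆ M' := fun V hVM => ⟨hMRO.1 V hVM, V, hVM, inter_subset_left⟩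
      have hM'S : M' ∈ S := by
        refine ⟨⟨fun W hW => hW.1, ?_, ⟨isRO_univ, univ, hMRO.2.2.1, subset_univ _⟩, ?_, ?_⟩,
          hMM' hMU0⟩
        · rintro W ⟨hW1, V, hVM, hVW⟩
          exact (hV V hVM).mono hVW
        · rintro W ⟨hW1, V, hVM, hVW⟩ W' ⟨hW1', V', hVM', hVW'⟩
          refine ⟨hW1.inter hW1', V ∩ V', hMRO.2.2.2.1 V hVM V' hVM', ?_⟩
          intro z hz
          exact ⟨hVW ⟨hz.1.1, hz.2⟩, hVW' ⟨hz.1.2, hz.2⟩⟩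
        · rintro W ⟨hW1, V, hVM, hVW⟩ W' hW' hWW'
          exact ⟨hW', V, hVM, hVW.trans hWW'⟩
      have hUM' : U ∈ M' := ⟨hU, univ, hMRO.2.2.1, by simp⟩
      exact hUM (hmax.2 hM'S hMM' hUM')
    · push_neg at hV
      obtain ⟨V, hVM, hVU⟩ := hV
      have hVsub : V ⊆ interior Uᶜ := by
        refine interior_maximal ?_ (hMRO.1 V hVM).isOpen'
        intro z hz hzU
        exact (Set.eq_empty_iff_forall_notMem.1 hVU) z ⟨hz, hzU⟩
      exact hMRO.2.2.2.2 V hVM _ (isRO_interior_compl hU.isOpen') hVsub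
  · intro c hcS hchain hcne
    obtain ⟨M₁, hM₁⟩ := hcne
    refine ⟨⋃₀ c, ⟨⟨?_, ?_, ?_, ?_, ?_⟩, ?_⟩, fun s hs => subset_sUnion_of_mem hs⟩
    · rintro U ⟨M, hM, hUM⟩; exact (hcS hM).1.1 U hUM
    · rintro U ⟨M, hM, hUM⟩; exact (hcS hM).1.2.1 U hUM
    · exact ⟨M₁, hM₁, (hcS hM₁).1.2.2.1⟩
    · rintro U ⟨M, hM, hUM⟩ V ⟨M', hM', hVM'⟩
      rcases hchain.total hM hM' with hle | hle
      · exact ⟨M', hM', (hcS hM').1.2.2.2.1 U (hle hUM) V hVM'⟩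
      · exact ⟨M, hM, (hcS hM).1.2.2.2.1 U hUM V (hle hVM')⟩
    · rintro U ⟨M, hM, hUM⟩ V hV hUV
      exact ⟨M, hM, (hcS hM).1.2.2.2.2 U hUM V hV hUV⟩
    · exact ⟨M₁, hM₁, (hcS hM₁).2⟩
  · refine ⟨⟨fun U hU => hU.1, fun U hU => hne.mono hU.2, ⟨isRO_univ, subset_univ _⟩, ?_, ?_⟩,
      ⟨h0, subset_rfl⟩⟩
    · rintro U ⟨hU1, hU2⟩ V ⟨hV1, hV2⟩
      exact ⟨hU1.inter hV1, subset_inter hU2 hV2⟩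
    · rintro U ⟨hU1, hU2⟩ V hV hUV
      exact ⟨hV, hU2.trans hUV⟩

/-- The collection of regular closed sets whose interior lies in `M`. -/
def roGamma (M : Set (Set X)) : Set (Set X) := {F | IsRC F ∧ interior F ∈ M}

lemma roGamma_inf {M : Set (Set X)} (hM : ROFilter M) {F G : Set X}
    (hF : F ∈ roGamma M) (hG : G ∈ roGamma M) : closure (interior (F ∩ G)) ∈ roGamma M := by
  refine ⟨isRC_closure isOpen_interior, ?_⟩
  have h1 : interior F ∩ interior G ∈ M := hM.2.2.2.1 _ hF.2 _ hG.2
  refine hM.2.2.2.2 _ h1 _ (isRO_interior_closure isOpen_interior) ?_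
  rw [← interior_inter]
  exact interior_maximal subset_closure isOpen_interior

lemma roGamma_clan {M : Set (Set X)} (hM : ROFilter M)
    (hcompl : ∀ U : Set X, IsRO U → U ∉ M → interior Uᶜ ∈ M) : IsClanRC (roGamma M) := by
  obtain ⟨hro, hnem, huniv, hinter, hup⟩ := hM
  refine ⟨fun F hF => hF.1, ⟨univ, isRC_univ, by simpa using huniv⟩, ?_, ?_, ?_, ?_⟩
  · rintro ⟨-, hmem⟩
    rw [interior_empty] at hmem
    exact (hnem _ hmem).ne_empty rfl
  · rintro F ⟨hF1, hF2⟩ G hG hFG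
    exact ⟨hG, hup _ hF2 _ (isRO_interior_rc hG) (interior_mono hFG)⟩
  · intro F G hFrc hGrc hFG
    by_contra hcon
    push_neg at hcon
    obtain ⟨hFn, hGn⟩ := hcon
    have hFc : Fᶜ ∈ M := by
      have := hcompl (interior F) (isRO_interior_rc hFrc) fun hh => hFn ⟨hFrc, hh⟩
      rwa [interior_compl_interior_rc hFrc] at this
    have hGc : Gᶜ ∈ M := by
      have := hcompl (interior G) (isRO_interior_rc hGrc) fun hh => hGn ⟨hGrc, hh⟩
      rwa [interior_compl_interior_rc hGrc] at this
    have hN : interior (F ∪ G) ∩ Fᶜ ∩ Gᶜ ∈ M := hinter _ (hinter _ hFG.2 _ hFc) _ hGc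
    obtain ⟨z, ⟨hz1, hz2⟩, hz3⟩ := hnem _ hN
    rcases interior_subset hz1 with h | h
    exacts [hz2 h, hz3 h]
  · intro F hF G hG
    obtain ⟨z, hz1, hz2⟩ := hnem _ (hinter _ hF.2 _ hG.2)
    exact ⟨z, interior_subset hz1, interior_subset hz2⟩

lemma eq_of_rc_mem_iff (hsr : Semiregular X) (ht0 : T0Space X) {x y : X}
    (h : ∀ F : Set X, IsRC F → (x ∈ F ↔ y ∈ F)) : x = y := by
  by_contra hne
  haveI := ht0
  obtain ⟨U, hU, hxor⟩ := exists_isOpen_xor'_mem hne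
  rcases hxor with ⟨hxU, hyU⟩ | ⟨hyU, hxU⟩
  · obtain ⟨F, hF, hxF, hFU⟩ := hsr U hU x hxU
    have hyF : y ∈ F := by by_contra hyF; exact hyU (hFU hyF)
    exact hxF ((h F hF).2 hyF)
  · obtain ⟨F, hF, hyF, hFU⟩ := hsr U hU y hyU
    have hxF : x ∈ F := by by_contra hxF; exact hxU (hFU hxF)
    exact hyF ((h F hF).1 hxF)

lemma dense_closure_inter {D U : Set X} (hD : Dense D) (hU : IsOpen U) :
    closure (U ∩ D) = closure U := by
  refine le_antisymm (closure_mono inter_subset_left) (closure_minimal ?_ isClosed_closure)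
  intro z hz
  rw [mem_closure_iff]
  intro o ho hzo
  obtain ⟨w, ⟨hw1, hw2⟩, hwD⟩ := hD.inter_open_nonempty (o ∩ U) (ho.inter hU) ⟨z, hzo, hz⟩
  exact ⟨w, hw1, hw2, hwD⟩

end Aux

section Main

open Set TopologicalSpace

variable {X : Type*} [TopologicalSpace X]

lemma preimage_rc_isOpen {F : Set X} (hF : IsRC F) :
    IsOpen ((Subtype.val : ↥{x : X | IsUPoint x} → X) ⁻¹' F) := by
  have he : (Subtype.val : ↥{x : X | IsUPoint x} → X) ⁻¹' F
      = Subtype.val ⁻¹' (closure Fᶜ)ᶜ := by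
    ext z
    simp only [Set.mem_preimage, Set.mem_compl_iff]
    exact upoint_mem_rc_iff z.2 hF
  rw [he]
  exact isClosed_closure.isOpen_compl.preimage continuous_subtype_val

lemma isClopen_preimage_rc {F : Set X} (hF : IsRC F) :
    IsClopen ((Subtype.val : ↥{x : X | IsUPoint x} → X) ⁻¹' F) :=
  ⟨hF.isClosed'.preimage continuous_subtype_val, preimage_rc_isOpen hF⟩

lemma embCl_preimage {D : Set X} (hD : Dense D) {F : Set X} (hF : IsRC F) :
    closure (Subtype.val '' ((Subtype.val : ↥D → X) ⁻¹' F)) = F := by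
  rw [Subtype.image_preimage_coe]
  refine le_antisymm (closure_minimal inter_subset_right hF.isClosed') ?_
  have h1 : closure (interior F ∩ D) = closure (interior F) :=
    dense_closure_inter hD isOpen_interior
  calc F = closure (interior F) := hF
    _ = closure (interior F ∩ D) := h1.symm
    _ ⊆ closure (D ∩ F) := closure_mono fun z hz => ⟨hz.2, interior_subset hz.1⟩

lemma embCl_isRC {D : Set X} (hD : Dense D) (A : Clopens ↥D) : IsRC (embCl D A) := by
  obtain ⟨U, hU, hUA⟩ := isOpen_induced_iff.1 A.isClopen.2
  have : embCl D A = closure U := by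
    unfold embCl
    rw [← hUA, Subtype.image_preimage_coe, inter_comm, dense_closure_inter hD hU]
  rw [this]
  exact isRC_closure hU

lemma embCl_inter_self {D : Set X} (A : Clopens ↥D) :
    embCl D A ∩ D = Subtype.val '' (A : Set ↥D) := by
  obtain ⟨C, hC, hCA⟩ := isClosed_induced_iff.1 A.isClopen.1
  have himg : Subtype.val '' (A : Set ↥D) = D ∩ C := by
    rw [← hCA, Subtype.image_preimage_coe]
  refine le_antisymm ?_
    (subset_inter subset_closure (by rintro z ⟨w, hwA, rfl⟩; exact w.2))
  rintro z ⟨hz1, hz2⟩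
  rw [himg]
  refine ⟨hz2, ?_⟩
  have hsub : closure (Subtype.val '' (A : Set ↥D)) ⊆ C := by
    rw [himg]
    exact closure_minimal inter_subset_right hC
  exact hsub hz1

lemma embCl_injective {D : Set X} {A B : Clopens ↥D} (h : embCl D A = embCl D B) : A = B := by
  have h2 : Subtype.val '' (A : Set ↥D) = Subtype.val '' (B : Set ↥D) := by
    rw [← embCl_inter_self, ← embCl_inter_self, h]
  ext z
  constructor
  · intro hz
    obtain ⟨w, hw, hwz⟩ := h2 ▸ Set.mem_image_of_mem Subtype.val hz
    exact Subtype.val_injective hwz ▸ hw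
  · intro hz
    obtain ⟨w, hw, hwz⟩ := h2.symm ▸ Set.mem_image_of_mem Subtype.val hz
    exact Subtype.val_injective hwz ▸ hw

lemma embCl_sup {D : Set X} (A B : Clopens ↥D) :
    embCl D (A ⊔ B) = embCl D A ∪ embCl D B := by
  unfold embCl
  rw [Clopens.coe_sup, Set.image_union, closure_union]

lemma dense_upoints (h : CSemiregular X) : Dense {x : X | IsUPoint x} := by
  rw [dense_iff_inter_open]
  rintro U hU ⟨x, hxU⟩
  obtain ⟨F, hF, hxF, hFU⟩ := h.1 U hU x hxU
  obtain ⟨M, hM, hU0, hcompl⟩ := exists_maximal_rofilter (isRO_compl_rc hF) ⟨x, hxF⟩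
  obtain ⟨y, hy⟩ := h.2.2 (roGamma M) (roGamma_clan hM hcompl)
  have hyu : IsUPoint y := by
    apply upoint_of_forall_inf
    intro F1 F2 h1 h2 hy1 hy2
    have m1 : F1 ∈ roGamma M := by rw [hy]; exact ⟨h1, hy1⟩
    have m2 : F2 ∈ roGamma M := by rw [hy]; exact ⟨h2, hy2⟩
    have h3 := roGamma_inf hM m1 m2
    rw [hy] at h3
    exact h3.2
  have hyF : y ∉ F := by
    intro hyF
    have h1 : F ∈ roGamma M := by rw [hy]; exact ⟨hF, hyF⟩
    have h2 : interior F ∩ Fᶜ ∈ M := hM.2.2.2.1 _ h1.2 _ hU0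
    obtain ⟨z, hz1, hz2⟩ := hM.2.1 _ h2
    exact hz2 (interior_subset hz1)
  exact ⟨y, hFU hyF, hyu⟩

end Main

section Main2

open Set TopologicalSpace Filter

variable {X : Type*} [TopologicalSpace X]

lemma compact_upoints (h : CSemiregular X) : CompactSpace ↥{x : X | IsUPoint x} := by
  rw [← isCompact_univ_iff, isCompact_iff_ultrafilter_le_nhds]
  intro f _
  set Γ : Set (Set X) :=
    {F | IsRC F ∧ (Subtype.val ⁻¹' F : Set ↥{x : X | IsUPoint x}) ∈ f} with hΓdef
  have hclan : IsClanRC Γ := by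
    refine ⟨fun F hF => hF.1, ⟨univ, isRC_univ, by rw [Set.preimage_univ]; exact univ_mem⟩, ?_, ?_, ?_, ?_⟩
    · rintro ⟨-, hmem⟩
      rw [Set.preimage_empty] at hmem
      exact Ultrafilter.empty_notMem hmem
    · rintro F ⟨hF1, hF2⟩ G hG hFG
      exact ⟨hG, Filter.mem_of_superset hF2 (preimage_mono hFG)⟩
    · intro F G hF hG hFG
      have hu : (Subtype.val ⁻¹' F : Set ↥{x : X | IsUPoint x}) ∪ Subtype.val ⁻¹' G ∈ f := by
        rw [← Set.preimage_union]; exact hFG.2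
      rcases Ultrafilter.union_mem_iff.1 hu with h' | h'
      exacts [Or.inl ⟨hF, h'⟩, Or.inr ⟨hG, h'⟩]
    · intro F hF G hG
      obtain ⟨z, hz1, hz2⟩ := Ultrafilter.nonempty_of_mem (inter_mem hF.2 hG.2)
      exact ⟨z, hz1, hz2⟩
  have hinf : ∀ F G, F ∈ Γ → G ∈ Γ → closure (interior (F ∩ G)) ∈ Γ := by
    intro F G hF hG
    refine ⟨isRC_closure isOpen_interior, ?_⟩
    refine Filter.mem_of_superset (inter_mem hF.2 hG.2) ?_
    rintro z ⟨hz1, hz2⟩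
    exact upoint_inf z.2 hF.1 hG.1 hz1 hz2
  obtain ⟨x, hx⟩ := h.2.2 Γ hclan
  have hxu : IsUPoint x := by
    apply upoint_of_forall_inf
    intro F G h1 h2 m1 m2
    have h3 := hinf F G (by rw [hx]; exact ⟨h1, m1⟩) (by rw [hx]; exact ⟨h2, m2⟩)
    rw [hx] at h3
    exact h3.2
  refine ⟨⟨x, hxu⟩, mem_univ _, ?_⟩
  intro s hs
  rw [mem_nhds_subtype] at hs
  obtain ⟨t, ht, hts⟩ := hs
  obtain ⟨U, hUt, hU, hxU⟩ := mem_nhds_iff.1 ht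
  obtain ⟨F, hF, hxF, hFU⟩ := h.1 U hU x hxU
  have hFf : (Subtype.val ⁻¹' F : Set ↥{x : X | IsUPoint x}) ∉ f := by
    intro hmem
    have hFΓ : F ∈ Γ := ⟨hF, hmem⟩
    rw [hx] at hFΓ
    exact hxF hFΓ.2
  have hcm : (Subtype.val ⁻¹' F : Set ↥{x : X | IsUPoint x})ᶜ ∈ f :=
    Ultrafilter.compl_mem_iff_notMem.2 hFf
  refine Filter.mem_of_superset hcm ?_
  intro z hz
  exact hts (hUt (hFU hz))

lemma t2_upoints (h : CSemiregular X) : T2Space ↥{x : X | IsUPoint x} := by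
  constructor
  intro a b hab
  have hne : ¬∀ F : Set X, IsRC F → ((a : X) ∈ F ↔ (b : X) ∈ F) := by
    intro hh
    exact hab (Subtype.ext (eq_of_rc_mem_iff h.1 h.2.1 hh))
  push_neg at hne
  obtain ⟨F, hF, hFne⟩ := hne
  have key : ∀ p q : ↥{x : X | IsUPoint x}, (p : X) ∈ F → (q : X) ∉ F →
      ∃ u v : Set ↥{x : X | IsUPoint x},
        IsOpen u ∧ IsOpen v ∧ p ∈ u ∧ q ∈ v ∧ Disjoint u v := by
    intro p q hp hq
    refine ⟨Subtype.val ⁻¹' (closure Fᶜ)ᶜ, Subtype.val ⁻¹' Fᶜ,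
      isClosed_closure.isOpen_compl.preimage continuous_subtype_val,
      hF.isClosed'.isOpen_compl.preimage continuous_subtype_val,
      (upoint_mem_rc_iff p.2 hF).1 hp, hq, ?_⟩
    rw [Set.disjoint_left]
    intro z hz1 hz2
    exact hz1 (subset_closure hz2)
  rcases hFne with ⟨haF, hbF⟩ | ⟨haF, hbF⟩
  · exact key a b haF hbF
  · obtain ⟨u, v, hu, hv, hbu, hav, hd⟩ := key b a hbF haF
    exact ⟨v, u, hv, hu, hav, hbu, hd.symm⟩

lemma ed_upoints (h : CSemiregular X) : ExtremallyDisconnected ↥{x : X | IsUPoint x} := by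
  have hD := dense_upoints h
  constructor
  intro s hs
  obtain ⟨U, hU, rfl⟩ := isOpen_induced_iff.1 hs
  have hcl : closure (Subtype.val ⁻¹' U : Set ↥{x : X | IsUPoint x})
      = Subtype.val ⁻¹' closure U := by
    ext z
    rw [closure_subtype, Subtype.image_preimage_coe, Set.inter_comm,
      dense_closure_inter hD hU]
    rfl
  rw [hcl]
  exact preimage_rc_isOpen (isRC_closure hU)

lemma zdim_upoints (h : CSemiregular X) :
    IsTopologicalBasis {s : Set ↥{x : X | IsUPoint x} | IsClopen s} := by
  apply isTopologicalBasis_of_isOpen_of_nhds (fun u hu => hu.2)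
  intro a u hau hu
  obtain ⟨U, hU, rfl⟩ := isOpen_induced_iff.1 hu
  obtain ⟨F, hF, haF, hFU⟩ := h.1 U hU (a : X) hau
  refine ⟨Subtype.val ⁻¹' Fᶜ, ⟨?_, hF.isClosed'.isOpen_compl.preimage continuous_subtype_val⟩,
    haF, preimage_mono hFU⟩
  rw [Set.preimage_compl]
  exact (preimage_rc_isOpen hF).isClosed_compl

lemma base_upoints (h : CSemiregular X) : ∀ U : Set X, IsOpen U → ∀ x ∈ U,
    ∃ A : Clopens ↥{x : X | IsUPoint x},
      x ∈ (embCl {x : X | IsUPoint x} A)ᶜ ∧ (embCl {x : X | IsUPoint x} A)ᶜ ⊆ U := by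
  intro U hU x hxU
  obtain ⟨F, hF, hxF, hFU⟩ := h.1 U hU x hxU
  refine ⟨⟨Subtype.val ⁻¹' F, isClopen_preimage_rc hF⟩, ?_, ?_⟩
  · show x ∈ (closure (Subtype.val '' (Subtype.val ⁻¹' F)))ᶜ
    rw [embCl_preimage (dense_upoints h) hF]
    exact hxF
  · show (closure (Subtype.val '' (Subtype.val ⁻¹' F)))ᶜ ⊆ U
    rw [embCl_preimage (dense_upoints h) hF]
    exact hFU

end Main2

section Main3

open Set TopologicalSpace

variable {X : Type*} [TopologicalSpace X]

lemma cs4_upoints (h : CSemiregular X) : ∀ Γ : Set (Clopens ↥{x : X | IsUPoint x}),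
    IsClan (fun A B : Clopens ↥{x : X | IsUPoint x} =>
      (embCl {x : X | IsUPoint x} A ∩ embCl {x : X | IsUPoint x} B).Nonempty) Γ →
    ∃ x : X, Γ = {A : Clopens ↥{x : X | IsUPoint x} | x ∈ embCl {x : X | IsUPoint x} A} := by
  intro Γ hΓ
  obtain ⟨hnem, hbot, hup, hprime, hcon⟩ := hΓ
  have hD := dense_upoints h
  set Γ' : Set (Set X) := {F | ∃ A ∈ Γ, embCl {x : X | IsUPoint x} A = F} with hΓ'
  have hpre : ∀ (F : Set X) (hF : IsRC F),
      embCl {x : X | IsUPoint x} ⟨Subtype.val ⁻¹' F, isClopen_preimage_rc hF⟩ = F := by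
    intro F hF
    show closure (Subtype.val '' (Subtype.val ⁻¹' F)) = F
    exact embCl_preimage hD hF
  have hmemCl : ∀ (A : Clopens ↥{x : X | IsUPoint x}) (z : ↥{x : X | IsUPoint x}),
      z ∈ (A : Set ↥{x : X | IsUPoint x}) → (z : X) ∈ embCl {x : X | IsUPoint x} A :=
    fun A z hz => subset_closure ⟨z, hz, rfl⟩
  have hclan : IsClanRC Γ' := by
    refine ⟨?_, ?_, ?_, ?_, ?_, ?_⟩
    · rintro F ⟨A, hA, rfl⟩
      exact embCl_isRC hD A
    · obtain ⟨A, hA⟩ := hnem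
      exact ⟨_, A, hA, rfl⟩
    · rintro ⟨A, hA, hA0⟩
      have hempty : (A : Set ↥{x : X | IsUPoint x}) = ∅ := by
        rw [← Set.subset_empty_iff]
        intro z hz
        have := hmemCl A z hz
        rw [hA0] at this
        exact this
      have : A = ⊥ := Clopens.ext (by rw [hempty, Clopens.coe_bot])
      exact hbot (this ▸ hA)
    · rintro F ⟨A, hA, rfl⟩ G hG hFG
      refine ⟨⟨Subtype.val ⁻¹' G, isClopen_preimage_rc hG⟩, ?_, hpre G hG⟩
      refine hup A hA _ ?_
      intro z hz
      show (z : X) ∈ G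
      exact hFG (hmemCl A z hz)
    · intro F G hFrc hGrc hFG
      obtain ⟨Cc, hCc, hCeq⟩ := hFG
      set A : Clopens ↥{x : X | IsUPoint x} :=
        ⟨Subtype.val ⁻¹' F, isClopen_preimage_rc hFrc⟩ with hAdef
      set B : Clopens ↥{x : X | IsUPoint x} :=
        ⟨Subtype.val ⁻¹' G, isClopen_preimage_rc hGrc⟩ with hBdef
      have hsup : embCl {x : X | IsUPoint x} (A ⊔ B) = F ∪ G := by
        rw [embCl_sup, hpre F hFrc, hpre G hGrc]
      have hCAB : Cc = A ⊔ B := embCl_injective (by rw [hCeq, hsup])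
      rcases hprime A B (hCAB ▸ hCc) with h' | h'
      · exact Or.inl ⟨A, h', hpre F hFrc⟩
      · exact Or.inr ⟨B, h', hpre G hGrc⟩
    · rintro F ⟨A, hA, rfl⟩ G ⟨B, hB, rfl⟩
      rcases hcon A hA B hB with h' | h' | h'
      · exact h'
      · obtain ⟨z, h1, h2⟩ := h'
        exact ⟨z, h2, h1⟩
      · have hABne : ((A ⊓ B : Clopens ↥{x : X | IsUPoint x}) :
            Set ↥{x : X | IsUPoint x}).Nonempty := by
          rw [Set.nonempty_iff_ne_empty]
          intro he
          exact h' (Clopens.ext (by rw [he, Clopens.coe_bot]))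
        obtain ⟨z, hz⟩ := hABne
        rw [Clopens.coe_inf] at hz
        exact ⟨z, hmemCl A z hz.1, hmemCl B z hz.2⟩
  obtain ⟨x, hx⟩ := h.2.2 Γ' hclan
  refine ⟨x, ?_⟩
  ext A
  simp only [Set.mem_setOf_eq]
  constructor
  · intro hA
    have hmem : embCl {x : X | IsUPoint x} A ∈ Γ' := ⟨A, hA, rfl⟩
    rw [hx] at hmem
    exact hmem.2
  · intro hxA
    have hmem : embCl {x : X | IsUPoint x} A ∈ Γ' := by
      rw [hx]
      exact ⟨embCl_isRC hD A, hxA⟩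
    obtain ⟨B, hB, hBe⟩ := hmem
    rwa [embCl_injective hBe] at hB

lemma ed_closure_inter {Z : Type*} [TopologicalSpace Z] (hZ : ExtremallyDisconnected Z)
    {s t : Set Z} (hs : IsOpen s) (ht : IsOpen t) :
    closure s ∩ closure t ⊆ closure (s ∩ t) := by
  rintro z ⟨hzs, hzt⟩
  rw [mem_closure_iff]
  intro o ho hzo
  by_contra hc
  rw [Set.not_nonempty_iff_eq_empty] at hc
  have h1 : z ∈ closure (o ∩ s) := mem_closure_inter_open ho hzo hzs
  have h2 : z ∈ closure (o ∩ t) := mem_closure_inter_open ho hzo hzt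
  have hdisj : ∀ w, w ∈ o ∩ s → w ∉ o ∩ t := by
    rintro w ⟨hwo, hws⟩ ⟨-, hwt⟩
    exact (Set.eq_empty_iff_forall_notMem.1 hc) w ⟨hwo, hws, hwt⟩
  have hod : closure (o ∩ s) ⊆ (o ∩ t)ᶜ :=
    closure_minimal (fun w hw => hdisj w hw) (ho.inter ht).isClosed_compl
  have hobj : closure (o ∩ t) ⊆ (closure (o ∩ s))ᶜ :=
    closure_minimal (fun w hw hw' => hod hw' hw)
      (hZ.open_closure _ (ho.inter hs)).isClosed_compl
  exact hobj h2 h1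

lemma ed_dense_subset_upoints {Y : Set X} (hYd : Dense Y)
    (hYe : ExtremallyDisconnected ↥Y) : Y ⊆ {x : X | IsUPoint x} := by
  intro y hy
  intro U V hU hV hyUV
  set s : Set ↥Y := Subtype.val ⁻¹' U with hsdef
  set t : Set ↥Y := Subtype.val ⁻¹' V with htdef
  have hys : (⟨y, hy⟩ : ↥Y) ∈ closure s := by
    rw [closure_subtype, Subtype.image_preimage_coe, Set.inter_comm,
      dense_closure_inter hYd hU]
    exact hyUV.1
  have hyt : (⟨y, hy⟩ : ↥Y) ∈ closure t := by
    rw [closure_subtype, Subtype.image_preimage_coe, Set.inter_comm,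
      dense_closure_inter hYd hV]
    exact hyUV.2
  have hcl : (⟨y, hy⟩ : ↥Y) ∈ closure (s ∩ t) :=
    ed_closure_inter hYe (hU.preimage continuous_subtype_val)
      (hV.preimage continuous_subtype_val) ⟨hys, hyt⟩
  rw [closure_subtype] at hcl
  refine closure_mono ?_ hcl
  rintro w ⟨v, ⟨hv1, hv2⟩, rfl⟩
  exact ⟨hv1, hv2⟩

lemma upoints_subset (h : CSemiregular X) {Y : Set X} (hYd : Dense Y)
    (hYc : CompactSpace ↥Y) (hYe : ExtremallyDisconnected ↥Y) :
    {x : X | IsUPoint x} ⊆ Y := by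
  intro x hx
  haveI := hYc
  have hxu : IsUPoint x := hx
  set ι := {F : Set X // IsRC F ∧ x ∈ F} with hι
  haveI hιne : Nonempty ι := ⟨⟨univ, isRC_univ, mem_univ x⟩⟩
  set Z : ι → Set ↥Y := fun i => Subtype.val ⁻¹' i.1 with hZ
  have hdir : Directed (· ⊇ ·) Z := by
    intro i j
    refine ⟨⟨closure (interior (i.1 ∩ j.1)), isRC_closure isOpen_interior,
      upoint_inf hxu i.2.1 j.2.1 i.2.2 j.2.2⟩, ?_, ?_⟩
    · intro z hz
      exact (closure_minimal interior_subset (i.2.1.isClosed'.inter j.2.1.isClosed') hz).1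
    · intro z hz
      exact (closure_minimal interior_subset (i.2.1.isClosed'.inter j.2.1.isClosed') hz).2
  have hne : ∀ i : ι, (Z i).Nonempty := by
    intro i
    have hint : (interior (i.1 : Set X)).Nonempty := by
      by_contra hc
      rw [Set.not_nonempty_iff_eq_empty] at hc
      have h1 : (i.1 : Set X) = closure (interior (i.1 : Set X)) := i.2.1
      rw [hc, closure_empty] at h1
      exact (h1 ▸ i.2.2 : x ∈ (∅ : Set X))
    obtain ⟨w, hw1, hw2⟩ :=
      hYd.inter_open_nonempty (interior (i.1 : Set X)) isOpen_interior hint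
    refine ⟨⟨w, hw2⟩, ?_⟩
    show w ∈ (i.1 : Set X)
    exact interior_subset hw1
  have hcls : ∀ i, IsClosed (Z i) := fun i => i.2.1.isClosed'.preimage continuous_subtype_val
  have hcomp : ∀ i, IsCompact (Z i) := fun i => (hcls i).isCompact
  obtain ⟨y', hy'⟩ :=
    IsCompact.nonempty_iInter_of_directed_nonempty_isCompact_isClosed Z hdir hne hcomp hcls
  have hyu : IsUPoint (y' : X) := ed_dense_subset_upoints hYd hYe y'.2
  have hmem : ∀ F : Set X, IsRC F → (x ∈ F ↔ (y' : X) ∈ F) := by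
    intro F hF
    constructor
    · intro hxF
      exact Set.mem_iInter.1 hy' ⟨F, hF, hxF⟩
    · intro hyF
      by_contra hxF
      have h2 : (y' : X) ∈ closure Fᶜ :=
        Set.mem_iInter.1 hy' ⟨closure Fᶜ, isRC_closure hF.isClosed'.isOpen_compl,
          subset_closure hxF⟩
      exact (upoint_mem_rc_iff hyu hF).1 hyF h2
  rw [eq_of_rc_mem_iff h.1 h.2.1 hmem]
  exact y'.2

end Main3

theorem stmt12' {X : Type*} [TopologicalSpace X] (h : CSemiregular X) :
    TwoContact X {x : X | IsUPoint x} ∧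
    Dense {x : X | IsUPoint x} ∧
    CompactSpace ↥{x : X | IsUPoint x} ∧
    T2Space ↥{x : X | IsUPoint x} ∧
    ExtremallyDisconnected ↥{x : X | IsUPoint x} ∧
    ∀ Y : Set X, Dense Y → CompactSpace ↥Y → T2Space ↥Y →
      ExtremallyDisconnected ↥Y → Y = {x : X | IsUPoint x} := by
  have hd := dense_upoints h
  have hc := compact_upoints h
  have ht2 := t2_upoints h
  have hed := ed_upoints h
  refine ⟨⟨hd, h.2.1, hc, ht2, zdim_upoints h, base_upoints h, cs4_upoints h⟩,
    hd, hc, ht2, hed, ?_⟩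
  intro Y hYd hYc hYt2 hYe
  exact le_antisymm (ed_dense_subset_upoints hYd hYe) (upoints_subset h hYd hYc hYe)

theorem stmt12 {X : Type*} [TopologicalSpace X] (h : CSemiregular X) :
    TwoContact X {x : X | IsUPoint x} ∧
    Dense {x : X | IsUPoint x} ∧
    CompactSpace ↥{x : X | IsUPoint x} ∧
    T2Space ↥{x : X | IsUPoint x} ∧
    ExtremallyDisconnected ↥{x : X | IsUPoint x} ∧
    ∀ Y : Set X, Dense Y → CompactSpace ↥Y → T2Space ↥Y →
      ExtremallyDisconnected ↥Y → Y = {x : X | IsUPoint x} := by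
  exact stmt12' h
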